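/- Fix d ≥ 1, L > 0 and an integer n ≥ 1. Let ψ : ℝ → ℝ be twice continuously differentiable with |ψ'(r)| ≤ 1 for all r ∈ ℝ and 0 ≤ ψ''(r) ≤ 2/(L n r²) for all r ≠ 0. Let x = (x₁,x₂), y = (y₁,y₂) ∈ ℝ^d × ℝ^d with x ≠ y and x₂ ≠ y₂, and set |x−y| = (|x₁−y₁|² + |x₂−y₂|²)^{1/2}. Let b₁, b₂ ∈ ℝ^d and d×d real matrices σ₁, σ₂ satisfy |b₁−b₂|² + ‖σ₁−σ₂‖² ≤ L|x−y|², and put Ā = |(σ₁−σ₂)ᵀ(x₂−y₂)|²/|x₂−y₂|². Then (1/2)(ψ'(|x−y|)/|x−y|)[‖σ₁−σ₂‖² − Ā + 2⟨x₂−y₂, b₁−b₂⟩ + 2⟨x₁−y₁, x₂−y₂⟩] + (1/2)ψ''(|x−y|) Ā ≤ (L+1)|x−y| + 1/n. -/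

import Mathlib

open MeasureTheory

/-- Euclidean norm of a vector in `ℝ^d`. -/
noncomputable def eucNorm {d : ℕ} (v : Fin d → ℝ) : ℝ := Real.sqrt (∑ i, v i ^ 2)

/-- Euclidean inner product in `ℝ^d`. -/
noncomputable def eucInner {d : ℕ} (v w : Fin d → ℝ) : ℝ := ∑ i, v i * w i

/-- Frobenius norm of a `d × d` real matrix. -/
noncomputable def frobNorm {d : ℕ} (A : Matrix (Fin d) (Fin d) ℝ) : ℝ :=
  Real.sqrt (∑ i, ∑ j, A i j ^ 2)

/-!
Write `r = |x - y|`, `v = x₂ - y₂` and `M = σ₁ - σ₂`. Since `|Mᵀ v| ≤ ‖M‖ |v|`, the quantity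
`Ā` lies between `0` and `‖M‖² ≤ L r²`, so the curvature bound `ψ''(r) ≤ 2 / (L n r²)` turns the
second-order term into at most `1 / n`. In the first-order term, Cauchy–Schwarz and `2ab ≤ a² + b²`
bound the bracket by `(L + 2) r²` in absolute value, and `|ψ'| ≤ 1` leaves `(L + 2) r / 2 ≤ (L + 1) r`.
-/

section EuclideanBounds

variable {d : ℕ}

lemma sq_eucNorm (v : Fin d → ℝ) : eucNorm v ^ 2 = ∑ i, v i ^ 2 :=
  Real.sq_sqrt (Finset.sum_nonneg fun _ _ => sq_nonneg _)

lemma sq_frobNorm (A : Matrix (Fin d) (Fin d) ℝ) : frobNorm A ^ 2 = ∑ i, ∑ j, A i j ^ 2 :=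
  Real.sq_sqrt (Finset.sum_nonneg fun _ _ => Finset.sum_nonneg fun _ _ => sq_nonneg _)

lemma eucNorm_pos {v : Fin d → ℝ} (hv : v ≠ 0) : 0 < eucNorm v := by
  obtain ⟨i, hi⟩ := Function.ne_iff.mp hv
  exact Real.sqrt_pos.mpr <| Finset.sum_pos' (fun _ _ => sq_nonneg _)
    ⟨i, Finset.mem_univ i, pow_two_pos_of_ne_zero hi⟩

lemma abs_eucInner_le (v w : Fin d → ℝ) : |eucInner v w| ≤ eucNorm v * eucNorm w := by
  rw [← Real.sqrt_sq_eq_abs, eucNorm, eucNorm,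
    ← Real.sqrt_mul (Finset.sum_nonneg fun _ _ => sq_nonneg _)]
  exact Real.sqrt_le_sqrt (Finset.sum_mul_sq_le_sq_mul_sq _ _ _)

lemma two_mul_abs_eucInner_le (v w : Fin d → ℝ) :
    2 * |eucInner v w| ≤ eucNorm v ^ 2 + eucNorm w ^ 2 := by
  nlinarith [abs_eucInner_le v w, two_mul_le_add_sq (eucNorm v) (eucNorm w)]

lemma sq_eucNorm_transpose_mulVec_le (M : Matrix (Fin d) (Fin d) ℝ) (v : Fin d → ℝ) :
    eucNorm (M.transpose.mulVec v) ^ 2 ≤ frobNorm M ^ 2 * eucNorm v ^ 2 := by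
  rw [sq_eucNorm, sq_frobNorm, sq_eucNorm, Finset.sum_comm, Finset.sum_mul]
  refine Finset.sum_le_sum fun j _ => ?_
  simpa [Matrix.mulVec, dotProduct] using Finset.sum_mul_sq_le_sq_mul_sq Finset.univ (M · j) v

lemma abs_sub_add_two_mul_eucInner_le {u v b : Fin d → ℝ} {F A K : ℝ} (hA0 : 0 ≤ A)
    (hAF : A ≤ F) (hK : eucNorm b ^ 2 + F ≤ K) :
    |F - A + 2 * eucInner v b + 2 * eucInner u v| ≤ K + eucNorm u ^ 2 + 2 * eucNorm v ^ 2 := by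
  have hvb := two_mul_abs_eucInner_le v b
  have huv := two_mul_abs_eucInner_le u v
  rw [abs_le]
  constructor <;>
    linarith [neg_abs_le (eucInner v b), neg_abs_le (eucInner u v),
      le_abs_self (eucInner v b), le_abs_self (eucInner u v)]

end EuclideanBounds

lemma half_mul_div_mul_le {p r S c : ℝ} (hr : 0 < r) (hp : |p| ≤ 1) (hS : |S| ≤ c * r ^ 2) :
    1 / 2 * (p / r) * S ≤ c / 2 * r :=
  calc 1 / 2 * (p / r) * S
      ≤ |1 / 2 * (p / r) * S| := le_abs_self _
    _ = |p| * |S| / (2 * r) := by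
      simp only [abs_mul, abs_div, abs_of_pos hr, abs_one, abs_two]; ring
    _ ≤ 1 * (c * r ^ 2) / (2 * r) := by gcongr
    _ = c / 2 * r := by field_simp

lemma half_mul_le_inv_of_le_div {q A L N r : ℝ} (hL : 0 < L) (hr : r ≠ 0) (hN : 0 ≤ N)
    (hq : q ≤ 2 / (L * N * r ^ 2)) (hA0 : 0 ≤ A) (hA : A ≤ L * r ^ 2) :
    1 / 2 * q * A ≤ 1 / N := by
  have hLr : L * r ^ 2 ≠ 0 := by positivity
  calc 1 / 2 * q * A
      ≤ 1 / 2 * (2 / (L * N * r ^ 2)) * (L * r ^ 2) := by gcongr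
    _ = 1 / N := by
      rw [mul_assoc, show L * N * r ^ 2 = N * (L * r ^ 2) by ring, ← div_div,
        div_mul_cancel₀ _ hLr]
      ring

theorem coupling_diffusion_part_estimate_general
    {d : ℕ} (L : ℝ) (hL : 0 < L) (n : ℕ)
    (ψ : ℝ → ℝ)
    (hψ' : ∀ r : ℝ, |deriv ψ r| ≤ 1)
    (hψ'' : ∀ r : ℝ, r ≠ 0 →
      0 ≤ deriv (deriv ψ) r ∧ deriv (deriv ψ) r ≤ 2 / (L * n * r ^ 2))
    (x₁ x₂ y₁ y₂ : Fin d → ℝ)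
    (hx₂y₂ : x₂ ≠ y₂)
    (b₁ b₂ : Fin d → ℝ) (σ₁ σ₂ : Matrix (Fin d) (Fin d) ℝ)
    (hLip : eucNorm (b₁ - b₂) ^ 2 + frobNorm (σ₁ - σ₂) ^ 2
      ≤ L * Real.sqrt (eucNorm (x₁ - y₁) ^ 2 + eucNorm (x₂ - y₂) ^ 2) ^ 2) :
    (1 / 2) * (deriv ψ (Real.sqrt (eucNorm (x₁ - y₁) ^ 2 + eucNorm (x₂ - y₂) ^ 2))
        / Real.sqrt (eucNorm (x₁ - y₁) ^ 2 + eucNorm (x₂ - y₂) ^ 2))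
      * (frobNorm (σ₁ - σ₂) ^ 2
          - eucNorm ((σ₁ - σ₂).transpose.mulVec (x₂ - y₂)) ^ 2 / eucNorm (x₂ - y₂) ^ 2
          + 2 * eucInner (x₂ - y₂) (b₁ - b₂) + 2 * eucInner (x₁ - y₁) (x₂ - y₂))
    + (1 / 2) * deriv (deriv ψ) (Real.sqrt (eucNorm (x₁ - y₁) ^ 2 + eucNorm (x₂ - y₂) ^ 2))
      * (eucNorm ((σ₁ - σ₂).transpose.mulVec (x₂ - y₂)) ^ 2 / eucNorm (x₂ - y₂) ^ 2)
    ≤ (L + 1) * Real.sqrt (eucNorm (x₁ - y₁) ^ 2 + eucNorm (x₂ - y₂) ^ 2) + 1 / n := by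
  set r := Real.sqrt (eucNorm (x₁ - y₁) ^ 2 + eucNorm (x₂ - y₂) ^ 2)
  set A := eucNorm ((σ₁ - σ₂).transpose.mulVec (x₂ - y₂)) ^ 2 / eucNorm (x₂ - y₂) ^ 2
  have hv : 0 < eucNorm (x₂ - y₂) := eucNorm_pos (sub_ne_zero.mpr hx₂y₂)
  have hr2 : r ^ 2 = eucNorm (x₁ - y₁) ^ 2 + eucNorm (x₂ - y₂) ^ 2 := Real.sq_sqrt (by positivity)
  have hr : 0 < r := Real.sqrt_pos.mpr (by positivity)
  have hA0 : 0 ≤ A := by positivity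
  have hAF : A ≤ frobNorm (σ₁ - σ₂) ^ 2 :=
    (div_le_iff₀ (by positivity)).mpr (sq_eucNorm_transpose_mulVec_le _ _)
  have hbracket := abs_sub_add_two_mul_eucInner_le (u := x₁ - y₁) (v := x₂ - y₂) hA0 hAF hLip
  have hfirst := half_mul_div_mul_le (c := L + 2) hr (hψ' r)
    (by linarith [sq_nonneg (eucNorm (x₁ - y₁))])
  have hsecond := half_mul_le_inv_of_le_div hL hr.ne' n.cast_nonneg (hψ'' r hr.ne').2 hA0
    (by linarith [sq_nonneg (eucNorm (b₁ - b₂))])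
  linarith [mul_pos hL hr]

/-- Bound on the diffusion part of the coupling operator (estimate (3.14)). -/
theorem coupling_diffusion_part_estimate
    {d : ℕ} (hd : 1 ≤ d) (L : ℝ) (hL : 0 < L) (n : ℕ) (hn : 1 ≤ n)
    (ψ : ℝ → ℝ) (hψ : ContDiff ℝ 2 ψ)
    (hψ' : ∀ r : ℝ, |deriv ψ r| ≤ 1)
    (hψ'' : ∀ r : ℝ, r ≠ 0 →
      0 ≤ deriv (deriv ψ) r ∧ deriv (deriv ψ) r ≤ 2 / (L * n * r ^ 2))
    (x₁ x₂ y₁ y₂ : Fin d → ℝ)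
    (hxy : (x₁, x₂) ≠ (y₁, y₂)) (hx₂y₂ : x₂ ≠ y₂)
    (b₁ b₂ : Fin d → ℝ) (σ₁ σ₂ : Matrix (Fin d) (Fin d) ℝ)
    (hLip : eucNorm (b₁ - b₂) ^ 2 + frobNorm (σ₁ - σ₂) ^ 2
      ≤ L * Real.sqrt (eucNorm (x₁ - y₁) ^ 2 + eucNorm (x₂ - y₂) ^ 2) ^ 2) :
    (1 / 2) * (deriv ψ (Real.sqrt (eucNorm (x₁ - y₁) ^ 2 + eucNorm (x₂ - y₂) ^ 2))
        / Real.sqrt (eucNorm (x₁ - y₁) ^ 2 + eucNorm (x₂ - y₂) ^ 2))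
      * (frobNorm (σ₁ - σ₂) ^ 2
          - eucNorm ((σ₁ - σ₂).transpose.mulVec (x₂ - y₂)) ^ 2 / eucNorm (x₂ - y₂) ^ 2
          + 2 * eucInner (x₂ - y₂) (b₁ - b₂) + 2 * eucInner (x₁ - y₁) (x₂ - y₂))
    + (1 / 2) * deriv (deriv ψ) (Real.sqrt (eucNorm (x₁ - y₁) ^ 2 + eucNorm (x₂ - y₂) ^ 2))
      * (eucNorm ((σ₁ - σ₂).transpose.mulVec (x₂ - y₂)) ^ 2 / eucNorm (x₂ - y₂) ^ 2)
    ≤ (L + 1) * Real.sqrt (eucNorm (x₁ - y₁) ^ 2 + eucNorm (x₂ - y₂) ^ 2) + 1 / n :=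
  coupling_diffusion_part_estimate_general L hL n ψ hψ' hψ'' x₁ x₂ y₁ y₂ hx₂y₂ b₁ b₂ σ₁ σ₂ hLip
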